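/- For any δ ∈ (0,1) and any d ≥ 2, Δ(δ,d) < δ, where Δ(δ,d) = (δ + δ²/d)/(2 - 2(1-1/d)δ + (1-1/d)δ²). That is, each application of the swap-test gadget strictly decreases the error parameter. -/
import Mathlib


noncomputable def Δ (δ d : ℝ) : ℝ := (δ + δ^2/d) / (2 - 2*(1 - 1/d)*δ + (1 - 1/d)*δ^2)

theorem stmt_2 (δ d : ℝ) (hδ0 : 0 < δ) (hδ1 : δ < 1) (hd : 2 ≤ d) :
    Δ δ d < δ := by
  have hd0 : (0:ℝ) < d := by linarith
  have hi0 : 0 < 1/d := by positivity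
  have hi : 1/d ≤ 1/2 := by
    rw [div_le_div_iff₀ hd0 (by norm_num)]; linarith
  have hc0 : 0 < 1 - 1/d := by linarith
  have hD : 0 < 2 - 2*(1 - 1/d)*δ + (1 - 1/d)*δ^2 := by nlinarith
  unfold Δ
  rw [div_lt_iff₀ hD]
  have h1d : δ^2/d = δ^2 * (1/d) := by ring
  rw [h1d]
  nlinarith [sq_nonneg δ, mul_pos hδ0 hi0, sq_nonneg (1-δ), mul_pos (mul_pos hδ0 hδ0) hi0]
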